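/- Let a compact connected Lie group G act freely and smoothly on a manifold P with a principal G-bundle projection p: P → B, equipped with a principal connection. Suppose γ: P → P is a G-equivariant diffeomorphism of P that descends to a map fixing every point of a connected submanifold F ⊆ B pointwise (i.e. γ preserves each fiber over F up to the G-action). For each m ∈ p⁻¹(F) let g_m ∈ G be the unique group element with γ(m) = g_m · m. Then the conjugacy class of g_m in G is constant on p⁻¹(F); that is, for any m, n ∈ p⁻¹(F) there exists h ∈ G with g_n = h g_m h⁻¹. -/

import Mathlib

open unitInterval

/-! Since `γ` commutes with horizontal lifts over `F` and with the `G`-action, the relation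
`γ m = g m • m` is carried along the horizontal lift of a path in `F` from `p m` to `p n`, ending
at a point `m'` of the fibre of `n` with `γ m' = g m • m'`. Writing `n = h • m'`, equivariance gives
`γ n = (h * g m * h⁻¹) • n`, and freeness identifies this element with `g n`. -/

section FreeAction

variable {G P : Type*} [Group G] [MulAction G P]

theorem eq_of_smul_eq_smul_of_free (hfree : ∀ (h : G) (m : P), h • m = m → h = 1)
    {a b : G} {m : P} (hab : a • m = b • m) : a = b :=
  (inv_mul_eq_one.mp (hfree (b⁻¹ * a) m (by rw [mul_smul, hab, inv_smul_smul]))).symm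

theorem eq_conj_of_smul_of_free (hfree : ∀ (h : G) (m : P), h • m = m → h = 1)
    {γ : P → P} (hγ : ∀ (h : G) (m : P), γ (h • m) = h • γ m)
    {a b : G} {m : P} (h : G) (ha : γ m = a • m) (hb : γ (h • m) = b • h • m) :
    b = h * a * h⁻¹ := by
  refine eq_of_smul_eq_smul_of_free hfree (m := h • m) ?_
  rw [← hb, hγ, ha, mul_smul, mul_smul, inv_smul_smul]

end FreeAction

theorem smul_horizontal_lift_of_smul {G P B : Type*} [Group G] [MulAction G P]
    {p : P → B} {γ : P → P} {F : Set B} {Hlift : (I → B) → P → (I → P)}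
    (hlift_equiv : ∀ (η : I → B) (m : P) (h : G), p m = η 0 →
      Hlift η (h • m) = fun t => h • Hlift η m t)
    (hlift_γ : ∀ (η : I → B) (m : P), p m = η 0 → (∀ t, η t ∈ F) →
      (fun t => γ (Hlift η m t)) = Hlift η (γ m))
    {η : I → B} (hηF : ∀ t, η t ∈ F) {m : P} (hm : p m = η 0) {a : G} (ha : γ m = a • m)
    (t : I) : γ (Hlift η m t) = a • Hlift η m t := by
  rw [congrFun (hlift_γ η m hm hηF) t, ha, hlift_equiv η m a hm]

theorem conjugacy_class_constant_general
    {G P B : Type*} [Group G] [MulAction G P]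
    (hfree : ∀ (h : G) (m : P), h • m = m → h = 1)
    (p : P → B)
    (hfib : ∀ m n : P, p m = p n → ∃ h : G, n = h • m)
    (γ : P → P) (hγ : ∀ (h : G) (m : P), γ (h • m) = h • γ m)
    (F : Set B)
    (g : P → G) (hg : ∀ m : P, p m ∈ F → γ m = g m • m)
    (Hlift : (I → B) → P → (I → P))
    (hlift_proj : ∀ (η : I → B) (m : P), p m = η 0 → ∀ t, p (Hlift η m t) = η t)
    (hlift_equiv : ∀ (η : I → B) (m : P) (h : G), p m = η 0 →
      Hlift η (h • m) = fun t => h • Hlift η m t)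
    (hlift_γ : ∀ (η : I → B) (m : P), p m = η 0 → (∀ t, η t ∈ F) →
      (fun t => γ (Hlift η m t)) = Hlift η (γ m))
    (hconn : ∀ b ∈ F, ∀ b' ∈ F, ∃ η : I → B, (∀ t, η t ∈ F) ∧ η 0 = b ∧ η 1 = b')
    (m n : P) (hm : p m ∈ F) (hn : p n ∈ F) :
    ∃ h : G, g n = h * g m * h⁻¹ := by
  obtain ⟨η, hηF, hη0, hη1⟩ := hconn (p m) hm (p n) hn
  have hm' : γ (Hlift η m 1) = g m • Hlift η m 1 :=
    smul_horizontal_lift_of_smul hlift_equiv hlift_γ hηF hη0.symm (hg m hm) 1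
  obtain ⟨h, rfl⟩ := hfib (Hlift η m 1) n (by rw [hlift_proj η m hη0.symm, hη1])
  exact ⟨h, eq_conj_of_smul_of_free hfree hγ h hm' (hg _ hn)⟩

/-- Constancy of the conjugacy class of `g_m` along the preimage of a connected
component `F` of the fixed locus, for a `G`-equivariant map `γ` of a principal
`G`-bundle `p : P → B` with a connection (abstracted as a horizontal-lift
operation `Hlift`, which `γ` preserves over `F`). -/
theorem conjugacy_class_constant
    {G P B : Type*} [Group G] [MulAction G P]
    (hfree : ∀ (h : G) (m : P), h • m = m → h = 1)
    (p : P → B)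
    (hpG : ∀ (h : G) (m : P), p (h • m) = p m)
    (hfib : ∀ m n : P, p m = p n → ∃ h : G, n = h • m)
    (γ : P → P) (hγ : ∀ (h : G) (m : P), γ (h • m) = h • γ m)
    (F : Set B)
    (g : P → G) (hg : ∀ m : P, p m ∈ F → γ m = g m • m)
    (Hlift : (I → B) → P → (I → P))
    (hlift_proj : ∀ (η : I → B) (m : P), p m = η 0 → ∀ t, p (Hlift η m t) = η t)
    (hlift_init : ∀ (η : I → B) (m : P), p m = η 0 → Hlift η m 0 = m)
    (hlift_equiv : ∀ (η : I → B) (m : P) (h : G), p m = η 0 →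
      Hlift η (h • m) = fun t => h • Hlift η m t)
    (hlift_γ : ∀ (η : I → B) (m : P), p m = η 0 → (∀ t, η t ∈ F) →
      (fun t => γ (Hlift η m t)) = Hlift η (γ m))
    (hconn : ∀ b ∈ F, ∀ b' ∈ F, ∃ η : I → B, (∀ t, η t ∈ F) ∧ η 0 = b ∧ η 1 = b')
    (m n : P) (hm : p m ∈ F) (hn : p n ∈ F) :
    ∃ h : G, g n = h * g m * h⁻¹ :=
  conjugacy_class_constant_general hfree p hfib γ hγ F g hg Hlift hlift_proj hlift_equiv hlift_γ
    hconn m n hm hn
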